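/- arXiv:2210.07283 — 3 statements merged into one kernel-verified Lean document; each statement's English description precedes it below -/
import Mathlib

section
/- Let $f > 1$, $g$ the cyclic shift on $(\mathbb{Z}/2\mathbb{Z})^f$, $\bm m = (0,1,1,\ldots,1)$, and $\bm m^{(k)} = \sum_{j=0}^{k-1} g^j \bm m$. Let $l = f$ for $f$ odd and $l = 2f$ for $f$ even. Then the elements $\bm m^{(1)}, \bm m^{(2)}, \ldots, \bm m^{(l)}$ are pairwise distinct in $(\mathbb{Z}/2\mathbb{Z})^f$. -/
/-- Cyclic shift `g` on `(ℤ/2)^f`: `(g m) j = m (j + 1)`. -/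
def shift2 {f : ℕ} (m : ZMod f → ZMod 2) : ZMod f → ZMod 2 :=
  fun j => m (j + 1)

/-- The vector `m = (0, 1, 1, …, 1) ∈ (ℤ/2)^f`. -/
def mBase (f : ℕ) : ZMod f → ZMod 2 :=
  fun j => if j = 0 then 0 else 1

/-- `m⁽ᵏ⁾ = ∑_{j=0}^{k-1} gʲ m`. -/
def mVec (f : ℕ) (k : ℕ) : ZMod f → ZMod 2 :=
  fun j => ∑ i ∈ Finset.range k, shift2^[i] (mBase f) j

/-- `l = f` if `f` is odd, `l = 2f` if `f` is even. -/
def lVal (f : ℕ) : ℕ := if f % 2 = 1 then f else 2 * f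

open Finset

lemma shift2_iter {f : ℕ} (m : ZMod f → ZMod 2) (i : ℕ) (j : ZMod f) :
    shift2^[i] m j = m (j + i) := by
  induction i generalizing m j with
  | zero => simp
  | succ n ih =>
    rw [Function.iterate_succ_apply, ih]
    show m (j + n + 1) = m (j + (n + 1 : ℕ))
    congr 1
    push_cast
    ring

lemma mVec_apply (f k : ℕ) (j : ZMod f) :
    mVec f k j = ∑ i ∈ Finset.range k, mBase f (j + i) :=
  Finset.sum_congr rfl fun i _ => shift2_iter _ i j

lemma mVec_count (f k a : ℕ) [NeZero f] :
    mVec f k (a : ZMod f) =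
      (k : ZMod 2) - ((Finset.range k).filter (fun i => f ∣ (a + i))).card := by
  rw [mVec_apply]
  have : ∀ i : ℕ, mBase f ((a : ZMod f) + i) = 1 - if f ∣ (a + i) then 1 else 0 := by
    intro i
    have h : ((a : ZMod f) + i = 0) ↔ f ∣ (a + i) := by
      rw [← Nat.cast_add, ZMod.natCast_eq_zero_iff]
    unfold mBase
    by_cases hc : f ∣ (a + i)
    · simp [h.mpr hc, hc]
    · simp [hc, h]
  simp only [this, Finset.sum_sub_distrib, Finset.sum_const, Finset.sum_boole,
    smul_eq_mul, mul_one, Finset.card_range, nsmul_eq_mul]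

lemma dvd_cases (f x : ℕ) (hf : 0 < f) (h : f ∣ x) (h2 : x < 2 * f) : x = 0 ∨ x = f := by
  rcases h with ⟨c, rfl⟩
  have hc : c < 2 := by
    by_contra hc
    push_neg at hc
    have : f * 2 ≤ f * c := Nat.mul_le_mul_left f hc
    omega
  interval_cases c <;> omega

lemma mVec_ne_zero (f : ℕ) (hf : 1 < f) (d : ℕ) (hd1 : 1 ≤ d) (hd2 : d < lVal f) :
    mVec f d ≠ 0 := by
  haveI : NeZero f := ⟨by omega⟩
  have hd2f : d < 2 * f := by
    unfold lVal at hd2; split at hd2 <;> omega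
  intro h
  have h0 : mVec f d ((0 : ℕ) : ZMod f) = 0 := by rw [h]; rfl
  have h1 : mVec f d ((1 : ℕ) : ZMod f) = 0 := by rw [h]; rfl
  rw [mVec_count] at h0 h1
  by_cases hdf : d = f
  · -- f even case: value at 0 is f - 1 = 1
    have hfe : f % 2 = 0 := by
      unfold lVal at hd2; split at hd2 <;> omega
    have hfilter : (Finset.range d).filter (fun i => f ∣ (0 + i)) = {0} := by
      ext i
      simp only [Finset.mem_filter, Finset.mem_range, Finset.mem_singleton, zero_add]
      constructor
      · rintro ⟨hi, hdvd⟩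
        rcases dvd_cases f i (by omega) hdvd (by omega) with h' | h' <;> omega
      · rintro rfl; exact ⟨by omega, dvd_zero _⟩
    rw [hfilter] at h0
    simp only [Finset.card_singleton, Nat.cast_one] at h0
    have hcast : (d : ZMod 2) = 0 := by
      rw [ZMod.natCast_eq_zero_iff]; omega
    rw [hcast] at h0
    exact absurd h0 (by decide)
  · -- card filter₀ = card filter₁ + 1
    have key : ((Finset.range d).filter (fun i => f ∣ (0 + i))).card =
        ((Finset.range d).filter (fun i => f ∣ (1 + i))).card + 1 := by
      by_cases hdlt : d < f
      · have e0 : (Finset.range d).filter (fun i => f ∣ (0 + i)) = {0} := by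
          ext i
          simp only [Finset.mem_filter, Finset.mem_range, Finset.mem_singleton, zero_add]
          constructor
          · rintro ⟨hi, hdvd⟩
            rcases dvd_cases f i (by omega) hdvd (by omega) with h' | h' <;> omega
          · rintro rfl; exact ⟨by omega, dvd_zero _⟩
        have e1 : (Finset.range d).filter (fun i => f ∣ (1 + i)) = ∅ := by
          ext i
          simp only [Finset.mem_filter, Finset.mem_range, Finset.notMem_empty, iff_false,
            not_and]
          intro hi hdvd
          rcases dvd_cases f (1 + i) (by omega) hdvd (by omega) with h' | h' <;> omega
        rw [e0, e1]
        simp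
      · have hfd : f < d := by omega
        have e0 : (Finset.range d).filter (fun i => f ∣ (0 + i)) = {0, f} := by
          ext i
          simp only [Finset.mem_filter, Finset.mem_range, Finset.mem_insert,
            Finset.mem_singleton, zero_add]
          constructor
          · rintro ⟨hi, hdvd⟩
            rcases dvd_cases f i (by omega) hdvd (by omega) with h' | h' <;> omega
          · rintro (rfl | rfl)
            · exact ⟨by omega, dvd_zero _⟩
            · exact ⟨by omega, dvd_refl _⟩
        have e1 : (Finset.range d).filter (fun i => f ∣ (1 + i)) = {f - 1} := by
          ext i
          simp only [Finset.mem_filter, Finset.mem_range, Finset.mem_singleton]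
          constructor
          · rintro ⟨hi, hdvd⟩
            rcases dvd_cases f (1 + i) (by omega) hdvd (by omega) with h' | h' <;> omega
          · rintro rfl
            constructor
            · omega
            · have : 1 + (f - 1) = f := by omega
              rw [this]
        rw [e0, e1, Finset.card_pair (by omega : (0:ℕ) ≠ f), Finset.card_singleton]
    rw [key] at h0
    push_cast at h0 h1
    have h2 : (1 : ZMod 2) = 0 := by linear_combination h1 - h0
    exact one_ne_zero h2

lemma mVec_add (f k d : ℕ) (j : ZMod f) :
    mVec f (k + d) j = mVec f k j + mVec f d (j + k) := by
  simp only [mVec_apply]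
  rw [Finset.sum_range_add]
  congr 1
  apply Finset.sum_congr rfl
  intro i _
  congr 1
  push_cast
  ring

/-- `m⁽¹⁾, …, m⁽ˡ⁾` are pairwise distinct in `(ℤ/2)^f`. -/
theorem mVec_pairwise_distinct (f : ℕ) (hf : 1 < f) :
    ∀ k₁ k₂ : ℕ, 1 ≤ k₁ → k₁ < k₂ → k₂ ≤ lVal f → mVec f k₁ ≠ mVec f k₂ := by
  intro k₁ k₂ h1 h12 h2 heq
  set d := k₂ - k₁ with hd
  have hk₂ : k₂ = k₁ + d := by omega
  have hd1 : 1 ≤ d := by omega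
  have hd2 : d < lVal f := by omega
  apply mVec_ne_zero f hf d hd1 hd2
  funext x
  have hx : mVec f k₂ (x - (k₁ : ZMod f)) = mVec f k₁ (x - (k₁ : ZMod f)) + mVec f d x := by
    rw [hk₂, mVec_add]
    congr 2
    ring
  rw [← heq] at hx
  show mVec f d x = 0
  linear_combination -hx
end

section
/- Let $f > 1$ and $p > 3$. Define for a tuple $\bm\lambda$ of linear polynomials the quantity $e(\bm\lambda)(x_0, \ldots, x_{f-1}) = \tfrac{1}{2}\sum_{j=0}^{f-1} p^j (x_j - \lambda_j(x_j))$ if $\lambda_{f-1}(x) \in \{x, x-1\}$, and $e(\bm\lambda)(x_0,\ldots,x_{f-1}) = \tfrac{1}{2}\big(p^f - 1 + \sum_{j=0}^{f-1} p^j (x_j - \lambda_j(x_j))\big)$ otherwise. With $\bm\mu = (x-1, p-2-x, p-1-x, \ldots, p-1-x)$, cyclic shift $g$, $\bm\mu^{(0)} = (x,\ldots,x)$, $\bm\mu^{(k)} = g^{k-1}\bm\mu \circ \bm\mu^{(k-1)}$, $l = f$ for $f$ odd and $l = 2f$ for $f$ even, define $e_l(\bm r) = \sum_{j=0}^{l-1}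 e(g^j \bm\mu)(\bm\mu^{(j)}(\bm r))$ for $\bm r \in \mathbb{Z}^f$. Then $e_l(\bm r)$ is an integer independent of $\bm r$ and $e_l(\bm r) \equiv 0 \pmod{p^f - 1}$. -/
/-- Cyclic shift `g` on `f`-tuples of linear polynomials (represented as functions `ℤ → ℤ`),
moving the `j`-th entry of the input to position `j + 1` (indices in `ZMod f`), i.e.
`(g lam) j = lam (j + 1)` — the convention under which the paper's recursion (1) and the
explicit tuples hold. -/
def shiftT {f : ℕ} (lam : ZMod f → ℤ → ℤ) : ZMod f → ℤ → ℤ :=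
  fun j => lam (j + 1)

/-- The tuple `μ = (x - 1, p - 2 - x, p - 1 - x, …, p - 1 - x)`. -/
def muT (p : ℤ) (f : ℕ) : ZMod f → ℤ → ℤ :=
  fun j x => if j = 0 then x - 1 else if j = 1 then p - 2 - x else p - 1 - x

/-- `μ⁽⁰⁾ = (x, …, x)` and `μ⁽ᵏ⁾ = gᵏ⁻¹ μ ∘ μ⁽ᵏ⁻¹⁾` (entrywise composition). -/
def muIter (p : ℤ) (f : ℕ) : ℕ → ZMod f → ℤ → ℤ
  | 0 => fun _ x => x
  | k + 1 => fun j x => (shiftT^[k] (muT p f)) j (muIter p f k j x)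

open Classical in
/-- The quantity `e(λ)` of Breuil–Paškūnas evaluated at `x = (x₀, …, x_{f-1})`:
`½ ∑ pʲ(xⱼ - λⱼ(xⱼ))` if `λ_{f-1}(x) ∈ {x, x-1}`, and
`½(pᶠ - 1 + ∑ pʲ(xⱼ - λⱼ(xⱼ)))` otherwise (the division is exact). -/
noncomputable def eP (p : ℤ) (f : ℕ) (lam : ZMod f → ℤ → ℤ) (x : ZMod f → ℤ) : ℤ :=
  if (lam (-1 : ZMod f) = fun t => t) ∨ (lam (-1 : ZMod f) = fun t => t - 1) then
    (∑ j ∈ Finset.range f, p ^ j * (x (j : ZMod f) - lam (j : ZMod f) (x (j : ZMod f)))) / 2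
  else
    (p ^ f - 1 +
      ∑ j ∈ Finset.range f, p ^ j * (x (j : ZMod f) - lam (j : ZMod f) (x (j : ZMod f)))) / 2

/-- `e_l(r) = ∑_{j=0}^{l-1} e(gʲμ)(μ⁽ʲ⁾(r))`. -/
noncomputable def eIterSum (p : ℤ) (f : ℕ) (r : ZMod f → ℤ) : ℤ :=
  ∑ k ∈ Finset.range (lVal f), eP p f (shiftT^[k] (muT p f)) fun i => muIter p f k i (r i)

lemma shift_iter {f : ℕ} (k : ℕ) (lam : ZMod f → ℤ → ℤ) (j : ZMod f) :
    (shiftT^[k] lam) j = lam (j + (k : ZMod f)) := by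
  induction k generalizing lam j with
  | zero => simp
  | succ k ih =>
      rw [Function.iterate_succ_apply, ih]
      show lam (j + (k:ZMod f) + 1) = _
      congr 1
      push_cast
      ring

lemma muIter_succ (p : ℤ) (f : ℕ) (k : ℕ) (j : ZMod f) (x : ℤ) :
    muIter p f (k+1) j x = muT p f (j + (k : ZMod f)) (muIter p f k j x) := by
  show (shiftT^[k] (muT p f)) j (muIter p f k j x) = _
  rw [shift_iter]

def Apow (p : ℤ) (n : ℕ) (t : ℤ) : ℤ := if Even n then t else p - 1 - t

lemma Apow_add (p : ℤ) (m n : ℕ) (t : ℤ) : Apow p m (Apow p n t) = Apow p (m + n) t := by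
  unfold Apow
  rcases Nat.even_or_odd m with hm | hm <;> rcases Nat.even_or_odd n with hn | hn <;>
    simp only [Nat.even_iff, Nat.odd_iff] at hm hn <;>
    simp [Nat.even_iff, Nat.add_mod, hm, hn] <;> ring

lemma muIter_segment (p : ℤ) (f : ℕ) (j : ZMod f) (x : ℤ) (a b : ℕ) (hab : a ≤ b)
    (h : ∀ k, a ≤ k → k < b → (j + (k : ZMod f) ≠ 0 ∧ j + (k : ZMod f) ≠ 1)) :
    muIter p f b j x = Apow p (b - a) (muIter p f a j x) := by
  induction b, hab using Nat.le_induction with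
  | base => simp [Apow]
  | succ b hab ih =>
      rw [muIter_succ, ih (fun k hk hk' => h k hk (by omega))]
      obtain ⟨h0, h1⟩ := h b hab (by omega)
      rw [muT, if_neg h0, if_neg h1]
      have : b + 1 - a = (b - a) + 1 := by omega
      rw [this]
      unfold Apow
      rcases Nat.even_or_odd (b - a) with he | he <;>
        simp only [Nat.even_iff, Nat.odd_iff] at he <;>
        simp [Nat.even_iff, Nat.add_mod, he] <;> ring

lemma natCast_eq_zero_iff' (f m : ℕ) (hf : 2 ≤ f) : ((m : ZMod f) = 0) ↔ m % f = 0 := by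
  haveI : NeZero f := ⟨by omega⟩
  constructor
  · intro h
    have := congrArg ZMod.val h
    simpa [ZMod.val_natCast] using this
  · intro h
    rw [← ZMod.natCast_mod, h]
    simp

lemma natCast_eq_one_iff' (f m : ℕ) (hf : 2 ≤ f) : ((m : ZMod f) = 1) ↔ m % f = 1 := by
  haveI : NeZero f := ⟨by omega⟩
  constructor
  · intro h
    have := congrArg ZMod.val h
    simpa [ZMod.val_natCast, ZMod.val_one_eq_one_mod, Nat.mod_eq_of_lt (by omega : 1 < f)] using this
  · intro h
    rw [← ZMod.natCast_mod, h]
    simp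

lemma jcast (f : ℕ) (j : ZMod f) (k : ℕ) [NeZero f] : j + (k : ZMod f) = ((j.val + k : ℕ) : ZMod f) := by
  push_cast
  rw [ZMod.natCast_val, ZMod.cast_id]

lemma muIter_cycle (p : ℤ) (f : ℕ) (hf : 2 ≤ f) (j : ZMod f) (x : ℤ) :
    muIter p f f j x = if j.val = 1 then Apow p (f - 2) (p - 2 - x) - 1 else Apow p (f - 1) x := by
  haveI : NeZero f := ⟨by omega⟩
  have hvlt : j.val < f := ZMod.val_lt j
  have hj : ((j.val : ℕ) : ZMod f) = j := by rw [ZMod.natCast_val, ZMod.cast_id]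
  -- helper: conditions for segment
  have hcond : ∀ m : ℕ, m % f ≠ 0 → m % f ≠ 1 → (((m : ℕ) : ZMod f) ≠ 0 ∧ ((m:ℕ) : ZMod f) ≠ 1) := by
    intro m h0 h1
    exact ⟨fun h => h0 ((natCast_eq_zero_iff' f m hf).mp h),
           fun h => h1 ((natCast_eq_one_iff' f m hf).mp h)⟩
  rcases Nat.lt_or_ge j.val 2 with hv2 | hv2
  · interval_cases hv : j.val
    · -- v = 0 : j = 0
      have hj0 : j = 0 := by rw [← hj]; simp
      simp only [hv, if_neg (by omega : ¬ (0:ℕ) = 1)]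
      have h1 : muIter p f 1 j x = x - 1 := by
        rw [muIter_succ, hj0]
        simp [muT, muIter]
      have h2 : muIter p f 2 j x = p - 1 - x := by
        rw [muIter_succ, h1, hj0]
        have : (0 : ZMod f) + ((1:ℕ) : ZMod f) = 1 := by push_cast; ring
        rw [this, muT]
        have h10 : (1 : ZMod f) ≠ 0 := by
          intro h; have := congrArg ZMod.val h
          simpa [ZMod.val_one_eq_one_mod, Nat.mod_eq_of_lt (by omega : 1 < f)] using this
        rw [if_neg h10, if_pos rfl]
        ring
      have := muIter_segment p f j x 2 f hf ?_
      · rw [this, h2]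
        have : p - 1 - x = Apow p 1 x := by simp [Apow]
        rw [this, Apow_add]
        congr 1
        omega
      · intro k hk hk'
        rw [hj0, zero_add]
        exact hcond k (by rw [Nat.mod_eq_of_lt (by omega)]; omega)
          (by rw [Nat.mod_eq_of_lt (by omega)]; omega)
    · -- v = 1 : j = 1
      have hj1 : j = 1 := by rw [← hj]; exact Nat.cast_one
      simp only [hv, if_pos rfl]
      have h1 : muIter p f 1 j x = p - 2 - x := by
        rw [muIter_succ, hj1]
        have : (1 : ZMod f) + ((0:ℕ):ZMod f) = 1 := by push_cast; ring
        rw [this, muT, muIter]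
        have h10 : (1 : ZMod f) ≠ 0 := by
          intro h; have := congrArg ZMod.val h
          simpa [ZMod.val_one_eq_one_mod, Nat.mod_eq_of_lt (by omega : 1 < f)] using this
        rw [if_neg h10, if_pos rfl]
      have hseg := muIter_segment p f j x 1 (f-1) (by omega) ?_
      · have hlast : muIter p f f j x = muIter p f (f-1) j x - 1 := by
          have hrec := muIter_succ p f (f-1) j x
          rw [(by omega : f - 1 + 1 = f)] at hrec
          rw [hrec, hj1]
          have : (1 : ZMod f) + (((f-1 : ℕ)):ZMod f) = 0 := by
            have h2 : ((1 + (f-1) : ℕ) : ZMod f) = ((f : ℕ) : ZMod f) := by congr 1; omega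
            push_cast at h2 ⊢
            rw [h2, ZMod.natCast_self]
          rw [this, muT, if_pos rfl]
        rw [hlast, hseg, h1, if_pos trivial, (by omega : f - 1 - 1 = f - 2)]
      · intro k hk hk'
        rw [hj1]
        have : (1 : ZMod f) + ((k:ℕ):ZMod f) = (((1 + k : ℕ)) : ZMod f) := by push_cast; ring
        rw [this]
        exact hcond (1+k) (by rw [Nat.mod_eq_of_lt (by omega)]; omega)
          (by rw [Nat.mod_eq_of_lt (by omega)]; omega)
  · -- v ≥ 2
    have hvne : ¬ j.val = 1 := by omega
    rw [if_neg hvne]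
    set v := j.val with hvdef
    have hseg1 := muIter_segment p f j x 0 (f - v) (by omega) ?_
    · have hstep1 : muIter p f (f - v + 1) j x = muIter p f (f - v) j x - 1 := by
        rw [muIter_succ, jcast]
        have : ((v + (f - v) : ℕ) : ZMod f) = 0 := by
          rw [(by omega : v + (f-v) = f)]; exact ZMod.natCast_self f
        rw [this, muT, if_pos rfl]
      have hstep2 : muIter p f (f - v + 2) j x = p - 2 - (muIter p f (f-v) j x - 1) := by
        rw [(by omega : f - v + 2 = (f - v + 1) + 1), muIter_succ, jcast, hstep1]
        have : ((v + (f - v + 1) : ℕ) : ZMod f) = 1 := by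
          rw [natCast_eq_one_iff' f _ hf]
          have : v + (f - v + 1) = f + 1 := by omega
          rw [this, Nat.add_mod_left]
          exact Nat.mod_eq_of_lt (by omega)
        rw [this, muT]
        have h10 : (1 : ZMod f) ≠ 0 := by
          intro h; have := congrArg ZMod.val h
          simpa [ZMod.val_one_eq_one_mod, Nat.mod_eq_of_lt (by omega : 1 < f)] using this
        rw [if_neg h10, if_pos rfl]
      have hseg2 := muIter_segment p f j x (f - v + 2) f (by omega) ?_
      · rw [hseg2, hstep2, hseg1]
        have e1 : p - 2 - (Apow p (f - v - 0) (muIter p f 0 j x) - 1) = Apow p (f - v + 1) x := by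
          show p - 2 - (Apow p (f - v - 0) x - 1) = _
          unfold Apow
          rcases Nat.even_or_odd (f - v) with he | he <;>
            simp only [Nat.even_iff, Nat.odd_iff] at he <;>
            simp [Nat.even_iff, Nat.add_mod, Nat.sub_zero, he] <;> ring
        rw [e1, Apow_add]
        congr 1
        omega
      · intro k hk hk'
        rw [jcast]
        refine hcond (v + k) ?_ ?_
        · have : v + k = f + (v + k - f) := by omega
          rw [this, Nat.add_mod_left, Nat.mod_eq_of_lt (by omega)]
          omega
        · have : v + k = f + (v + k - f) := by omega
          rw [this, Nat.add_mod_left, Nat.mod_eq_of_lt (by omega)]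
          omega
    · intro k hk hk'
      rw [jcast]
      refine hcond (v + k) ?_ ?_ <;> rw [Nat.mod_eq_of_lt (by omega)] <;> omega

lemma muIter_add_f (p : ℤ) (f : ℕ) (hf : 2 ≤ f) (b : ℕ) (j : ZMod f) (x : ℤ) :
    muIter p f (f + b) j x = muIter p f b j (muIter p f f j x) := by
  induction b with
  | zero => simp [muIter]
  | succ b ih =>
      have h1 := muIter_succ p f (f + b) j x
      rw [(by omega : f + b + 1 = f + (b+1))] at h1
      rw [h1, ih, muIter_succ]
      congr 2
      push_cast
      rw [ZMod.natCast_self]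
      ring

lemma muIter_lVal (p : ℤ) (f : ℕ) (hf : 2 ≤ f) (j : ZMod f) (x : ℤ) :
    muIter p f (lVal f) j x = x := by
  haveI : NeZero f := ⟨by omega⟩
  rcases Nat.even_or_odd f with hfe | hfo
  · -- f even : lVal f = 2 f, and muIter f is c - x
    have hl : lVal f = f + f := by
      unfold lVal
      rw [if_neg (by simp only [Nat.even_iff] at hfe; omega)]
      ring
    have hform : ∀ y : ℤ, muIter p f f j y = (if j.val = 1 then p - 3 else p - 1) - y := by
      intro y
      rw [muIter_cycle p f hf j y]
      have hf2 : Even (f - 2) := by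
        simp only [Nat.even_iff] at hfe ⊢; omega
      have hf1 : ¬ Even (f - 1) := by
        simp only [Nat.even_iff] at hfe ⊢; omega
      by_cases hv : j.val = 1 <;> simp [hv, Apow, hf2, hf1] <;> ring
    rw [hl, muIter_add_f p f hf, hform, hform]
    ring_nf
  · -- f odd : lVal f = f
    have hl : lVal f = f := by
      unfold lVal
      rw [if_pos (by simp only [Nat.odd_iff] at hfo; omega)]
    have hf2 : ¬ Even (f - 2) := by
      simp only [Nat.odd_iff] at hfo; simp only [Nat.even_iff]; omega
    have hf1 : Even (f - 1) := by
      simp only [Nat.odd_iff] at hfo; simp only [Nat.even_iff]; omega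
    rw [hl, muIter_cycle p f hf j x]
    by_cases hv : j.val = 1 <;> simp [hv, Apow, hf2, hf1] <;> ring

lemma muT_id_iff (p : ℤ) (f : ℕ) (hp : 3 < p) (m : ZMod f) :
    ((muT p f m = fun t => t) ∨ (muT p f m = fun t => t - 1)) ↔ m = 0 := by
  constructor
  · intro h
    by_contra hm
    rcases h with h | h <;> (
      have h0 := congrFun h 0
      simp only [muT, if_neg hm] at h0
      by_cases h1 : m = 1 <;> simp [h1] at h0 <;> omega)
  · intro h
    right
    subst h
    funext t
    simp [muT]

lemma eP_shift (p : ℤ) (f : ℕ) (hf : 2 ≤ f) (hp : 3 < p) (k : ℕ) (r : ZMod f → ℤ) :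
    eP p f (shiftT^[k] (muT p f)) (fun i => muIter p f k i (r i)) =
      ((if k % f = 1 then 0 else p ^ f - 1) +
        ∑ j ∈ Finset.range f,
          p ^ j * (muIter p f k (j : ZMod f) (r (j : ZMod f))
            - muIter p f (k+1) (j : ZMod f) (r (j : ZMod f)))) / 2 := by
  haveI : NeZero f := ⟨by omega⟩
  have hcondsum : ∀ j : ℕ,
      (shiftT^[k] (muT p f)) (j : ZMod f) (muIter p f k (j : ZMod f) (r (j : ZMod f)))
        = muIter p f (k+1) (j : ZMod f) (r (j : ZMod f)) := by
    intro j
    rw [shift_iter, muIter_succ]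
  have hcond : ((shiftT^[k] (muT p f)) (-1 : ZMod f) = fun t => t) ∨
      ((shiftT^[k] (muT p f)) (-1 : ZMod f) = fun t => t - 1) ↔ k % f = 1 := by
    rw [shift_iter, muT_id_iff p f hp]
    rw [(by ring : (-1 : ZMod f) + (k : ZMod f) = (k : ZMod f) - 1), sub_eq_zero]
    rw [show ((k:ZMod f) = 1 ↔ k % f = 1) from natCast_eq_one_iff' f k hf]
  unfold eP
  by_cases hk : k % f = 1
  · rw [if_pos (hcond.mpr hk), if_pos hk]
    rw [zero_add]
    congr 1
  · rw [if_neg (fun h => hk (hcond.mp h)), if_neg hk]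
    congr 2

lemma sum_ite_zmod {M : Type*} [AddCommMonoid M] (f : ℕ) (hf : 0 < f) (a : ZMod f) (h : ℕ → M) :
    ∑ j ∈ Finset.range f, (if (j : ZMod f) = a then h j else 0) = h a.val := by
  haveI : NeZero f := ⟨by omega⟩
  rw [Finset.sum_eq_single a.val]
  · rw [if_pos (by rw [ZMod.natCast_val, ZMod.cast_id])]
  · intro j hj hne
    rw [if_neg]
    intro hc
    apply hne
    rw [← ZMod.val_cast_of_lt (Finset.mem_range.mp hj), hc]
  · intro hc
    exact absurd (Finset.mem_range.mpr (ZMod.val_lt a)) hc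

lemma even_numer (p : ℤ) (f : ℕ) (hf : 2 ≤ f) (k : ℕ) (Y : ℕ → ℤ) :
    2 ∣ (if k % f = 1 then 0 else p ^ f - 1) +
      ∑ j ∈ Finset.range f, p ^ j * (Y j - muT p f ((j : ZMod f) + (k : ZMod f)) (Y j)) := by
  haveI : NeZero f := ⟨by omega⟩
  haveI : Fact (1 < f) := ⟨by omega⟩
  rw [show (2 : ℤ) = ((2:ℕ) : ℤ) by norm_num,
    ← ZMod.intCast_zmod_eq_zero_iff_dvd _ 2]
  push_cast
  set q : ZMod 2 := ((p : ℤ) : ZMod 2) with hq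
  have h20 : (2 : ZMod 2) = 0 := rfl
  -- rewrite each summand
  have hsummand : ∀ j : ℕ,
      (q ^ j * ((Y j : ZMod 2) - ((muT p f ((j : ZMod f) + (k : ZMod f)) (Y j) : ℤ) : ZMod 2)))
      = q ^ j * (q + 1) +
        ((if ((j : ZMod f) + (k : ZMod f) = 0) then q ^ (j+1) else 0) +
         (if ((j : ZMod f) + (k : ZMod f) = 1) then q ^ j else 0)) := by
    intro j
    by_cases h0 : ((j : ZMod f) + (k : ZMod f) = 0)
    · have h1 : ¬ ((j : ZMod f) + (k : ZMod f) = 1) := by rw [h0]; exact zero_ne_one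
      rw [if_pos h0, if_neg h1]
      unfold muT
      rw [if_pos h0]
      push_cast
      linear_combination (-(q * q ^ j)) * h20
    · rw [if_neg h0]
      unfold muT
      rw [if_neg h0]
      by_cases h1 : ((j : ZMod f) + (k : ZMod f) = 1)
      · rw [if_pos h1, if_pos h1]
        push_cast
        linear_combination (((Y j : ZMod 2)) - q) * q ^ j * h20
      · rw [if_neg h1, if_neg h1]
        push_cast
        linear_combination (((Y j : ZMod 2)) - q) * q ^ j * h20
  calc (if k % f = 1 then (0:ZMod 2) else q ^ f - 1) +
        ∑ j ∈ Finset.range f, q ^ j * ((Y j : ZMod 2) - ((muT p f ((j:ZMod f) + (k:ZMod f)) (Y j) : ℤ) : ZMod 2))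
      = (if k % f = 1 then (0:ZMod 2) else q ^ f - 1) +
        ((∑ j ∈ Finset.range f, q ^ j) * (q + 1) +
          (q ^ ((-(k : ZMod f)).val + 1) + q ^ ((1 - (k : ZMod f)).val))) := by
        congr 1
        rw [Finset.sum_congr rfl (fun j _ => hsummand j), Finset.sum_add_distrib,
          Finset.sum_add_distrib, ← Finset.sum_mul]
        congr 1
        congr 1
        · have : ∀ j : ℕ, (if ((j:ZMod f) + (k:ZMod f) = 0) then q ^ (j+1) else (0:ZMod 2))
              = (if ((j:ZMod f) = -(k:ZMod f)) then q ^ (j+1) else 0) := by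
            intro j; congr 1; simp [add_eq_zero_iff_eq_neg]
          rw [Finset.sum_congr rfl (fun j _ => this j),
            sum_ite_zmod f (by omega) (-(k:ZMod f)) (fun j => q ^ (j+1))]
        · have : ∀ j : ℕ, (if ((j:ZMod f) + (k:ZMod f) = 1) then q ^ j else (0:ZMod 2))
              = (if ((j:ZMod f) = 1 - (k:ZMod f)) then q ^ j else 0) := by
            intro j; congr 1; simp [eq_sub_iff_add_eq]
          rw [Finset.sum_congr rfl (fun j _ => this j),
            sum_ite_zmod f (by omega) (1 - (k:ZMod f)) (fun j => q ^ j)]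
    _ = 0 := by
        rcases (by decide : ∀ x : ZMod 2, x = 0 ∨ x = 1) q with hq01 | hq01
        · -- q = 0
          rw [hq01]
          have hsum : (∑ j ∈ Finset.range f, (0:ZMod 2) ^ j) = 1 := by
            have : ∀ j : ℕ, ((0:ZMod 2)) ^ j = if j = 0 then 1 else 0 := by
              intro j; exact zero_pow_eq j
            rw [Finset.sum_congr rfl (fun j _ => this j), Finset.sum_ite_eq' (Finset.range f) 0 (fun _ => (1:ZMod 2))]
            rw [if_pos (Finset.mem_range.mpr (by omega))]
          rw [hsum, zero_pow (Nat.succ_ne_zero _)]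
          by_cases hk : k % f = 1
          · have hk1 : (1 - (k : ZMod f)) = 0 := by
              rw [sub_eq_zero]
              exact ((natCast_eq_one_iff' f k hf).mpr hk).symm
            rw [if_pos hk, hk1, ZMod.val_zero, pow_zero]
            linear_combination h20
          · have hk1 : (1 - (k : ZMod f)) ≠ 0 := by
              rw [sub_ne_zero]
              intro h
              exact hk ((natCast_eq_one_iff' f k hf).mp h.symm)
            have : (1 - (k : ZMod f)).val ≠ 0 := fun h => hk1 ((ZMod.val_eq_zero _).mp h)
            rw [if_neg hk, zero_pow this, zero_pow (by omega : f ≠ 0)]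
            ring
        · -- q = 1
          rw [hq01]
          simp only [one_pow]
          by_cases hk : k % f = 1 <;> simp [hk] <;>
            linear_combination (((f : ZMod 2)) + 1) * h20

lemma filter_mod_range_f (f : ℕ) (hf : 2 ≤ f) :
    Finset.filter (fun k => k % f = 1) (Finset.range f) = {1} := by
  ext k
  simp only [Finset.mem_filter, Finset.mem_range, Finset.mem_singleton]
  constructor
  · rintro ⟨hk, hm⟩
    rwa [Nat.mod_eq_of_lt hk] at hm
  · rintro rfl
    exact ⟨by omega, by rw [Nat.mod_eq_of_lt (by omega)]⟩

lemma filter_mod_range_2f (f : ℕ) (hf : 2 ≤ f) :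
    Finset.filter (fun k => k % f = 1) (Finset.range (2 * f)) = {1, f + 1} := by
  ext k
  simp only [Finset.mem_filter, Finset.mem_range, Finset.mem_insert, Finset.mem_singleton]
  constructor
  · rintro ⟨hk, hm⟩
    rcases Nat.lt_or_ge k f with h | h
    · left; rwa [Nat.mod_eq_of_lt h] at hm
    · right
      have : k % f = k - f := by
        rw [Nat.mod_eq_sub_mod h, Nat.mod_eq_of_lt (by omega)]
      omega
  · rintro (rfl | rfl)
    · exact ⟨by omega, by rw [Nat.mod_eq_of_lt (by omega)]⟩
    · refine ⟨by omega, ?_⟩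
      rw [Nat.add_mod_left, Nat.mod_eq_of_lt (by omega)]

lemma sum_delta (f : ℕ) (hf : 2 ≤ f) (c : ℤ) :
    ∑ k ∈ Finset.range (lVal f), (if k % f = 1 then (0:ℤ) else c) =
      (if f % 2 = 1 then ((f:ℤ) - 1) else 2 * ((f:ℤ) - 1)) * c := by
  have hsplit : ∀ l : ℕ, ∑ k ∈ Finset.range l, (if k % f = 1 then (0:ℤ) else c)
      = (l : ℤ) * c - ((Finset.filter (fun k => k % f = 1) (Finset.range l)).card : ℤ) * c := by
    intro l
    have h1 : ∑ k ∈ Finset.range l, (if k % f = 1 then (0:ℤ) else c)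
        = ∑ k ∈ Finset.range l, (c - if k % f = 1 then c else 0) := by
      apply Finset.sum_congr rfl
      intro k _
      by_cases hk : k % f = 1 <;> simp [hk]
    rw [h1, Finset.sum_sub_distrib, Finset.sum_const, Finset.card_range,
      ← Finset.sum_filter, Finset.sum_const]
    push_cast
    ring
  unfold lVal
  by_cases hfp : f % 2 = 1
  · rw [if_pos hfp, if_pos hfp, hsplit f, filter_mod_range_f f hf]
    simp
    ring
  · rw [if_neg hfp, if_neg hfp, hsplit (2*f), filter_mod_range_2f f hf]
    rw [Finset.card_insert_of_notMem (by simp; omega), Finset.card_singleton]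
    push_cast
    ring

lemma two_mul_eIterSum (p : ℤ) (f : ℕ) (hf : 2 ≤ f) (hp : 3 < p) (r : ZMod f → ℤ) :
    2 * eIterSum p f r =
      (if f % 2 = 1 then ((f:ℤ) - 1) else 2 * ((f:ℤ) - 1)) * (p ^ f - 1) := by
  haveI : NeZero f := ⟨by omega⟩
  unfold eIterSum
  rw [Finset.mul_sum]
  have hterm : ∀ k : ℕ,
      2 * eP p f (shiftT^[k] (muT p f)) (fun i => muIter p f k i (r i)) =
        (if k % f = 1 then (0:ℤ) else p ^ f - 1) +
          ∑ j ∈ Finset.range f,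
            p ^ j * (muIter p f k (j : ZMod f) (r (j : ZMod f))
              - muIter p f (k+1) (j : ZMod f) (r (j : ZMod f))) := by
    intro k
    rw [eP_shift p f hf hp k r]
    apply Int.mul_ediv_cancel'
    have heq : ∀ j : ℕ, muIter p f (k+1) (j : ZMod f) (r (j : ZMod f))
        = muT p f ((j : ZMod f) + (k : ZMod f)) (muIter p f k (j : ZMod f) (r (j : ZMod f))) := by
      intro j
      rw [muIter_succ]
    rw [Finset.sum_congr rfl (fun j _ => by rw [heq j])]
    exact even_numer p f hf k (fun j => muIter p f k (j : ZMod f) (r (j : ZMod f)))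
  rw [Finset.sum_congr rfl (fun k _ => hterm k), Finset.sum_add_distrib, sum_delta f hf]
  have htel : ∑ k ∈ Finset.range (lVal f), ∑ j ∈ Finset.range f,
      p ^ j * (muIter p f k (j : ZMod f) (r (j : ZMod f))
        - muIter p f (k+1) (j : ZMod f) (r (j : ZMod f))) = 0 := by
    rw [Finset.sum_comm]
    apply Finset.sum_eq_zero
    intro j _
    rw [← Finset.mul_sum, Finset.sum_range_sub' (fun k => muIter p f k (j : ZMod f) (r (j : ZMod f)))]
    rw [muIter_lVal p f hf]
    show p ^ j * (r (j : ZMod f) - r (j : ZMod f)) = 0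
    ring
  rw [htel, add_zero]

/-- `e_l(r)` is independent of `r` and divisible by `pᶠ - 1`. -/
theorem eIterSum_const_and_dvd (p : ℤ) (f : ℕ) (hf : 1 < f) (hp : 3 < p) :
    (∀ r r' : ZMod f → ℤ, eIterSum p f r = eIterSum p f r') ∧
    ∀ r : ZMod f → ℤ, (p ^ f - 1) ∣ eIterSum p f r := by
  have hf2 : 2 ≤ f := hf
  constructor
  · intro r r'
    have h1 := two_mul_eIterSum p f hf2 hp r
    have h2 := two_mul_eIterSum p f hf2 hp r'
    omega
  · intro r
    have h1 := two_mul_eIterSum p f hf2 hp r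
    by_cases hodd : f % 2 = 1
    · obtain ⟨m, hm⟩ : ∃ m, f = 2 * m + 1 := ⟨f / 2, by omega⟩
      rw [if_pos hodd] at h1
      refine ⟨(m : ℤ), ?_⟩
      have h2 : ((f : ℤ) - 1) * (p ^ f - 1) = 2 * ((p ^ f - 1) * (m : ℤ)) := by
        rw [hm]
        push_cast
        ring
      rw [h2] at h1
      linarith
    · rw [if_neg hodd] at h1
      refine ⟨((f : ℤ) - 1), ?_⟩
      have h2 : 2 * ((f : ℤ) - 1) * (p ^ f - 1) = 2 * ((p ^ f - 1) * ((f:ℤ) - 1)) := by ring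
      rw [h2] at h1
      linarith
end

section
/- Let $f > 1$ and $p > 3$. Every entry $\mu_j^{(k)}(x)$ of every tuple $\bm\mu^{(k)}$, $1 \le k \le l$ (with $l = f$ for $f$ odd, $l = 2f$ for $f$ even), lies in the set $\{x, x-1, x+1, p-2-x, p-3-x, p-1-x\}$. -/
lemma shiftT_iterate {f : ℕ} (lam : ZMod f → ℤ → ℤ) :
    ∀ (k : ℕ) (j : ZMod f), (shiftT^[k] lam) j = lam (j + (k : ZMod f))
  | 0, j => by simp
  | (k + 1), j => by
      rw [Function.iterate_succ_apply']
      show (shiftT^[k] lam) (j + 1) = _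
      rw [shiftT_iterate lam k (j + 1)]
      push_cast
      ring_nf

lemma not_bad (p : ℤ) (hp : 3 < p) (g : ℤ → ℤ)
    (hg : g = (fun x => x) ∨ g = (fun x => x + 1) ∨ g = (fun x => p - 2 - x) ∨
      g = (fun x => p - 1 - x)) :
    ¬ (g = (fun x => x - 1) ∨ g = (fun x => p - 3 - x)) := by
  rintro (h | h) <;> rcases hg with hg | hg | hg | hg <;> subst hg <;>
    (have h0 := congrFun h 0; have h1 := congrFun h 1; omega)

lemma key (p : ℤ) (f : ℕ) (hf : 1 < f) (hp : 3 < p) : ∀ (k : ℕ) (j : ZMod f),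
    (muIter p f k j = (fun x => x) ∨ muIter p f k j = (fun x => x - 1) ∨
     muIter p f k j = (fun x => x + 1) ∨ muIter p f k j = (fun x => p - 2 - x) ∨
     muIter p f k j = (fun x => p - 3 - x) ∨ muIter p f k j = (fun x => p - 1 - x)) ∧
    ((muIter p f k j = (fun x => x - 1) ∨ muIter p f k j = (fun x => p - 3 - x)) →
      j + (k : ZMod f) = 1) ∧
    (j + (k : ZMod f) = 1 →
      (muIter p f k j = (fun x => x) ∨ muIter p f k j = (fun x => p - 2 - x) ∨
       muIter p f k j = (fun x => x - 1) ∨ muIter p f k j = (fun x => p - 3 - x))) := by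
  haveI : Fact (1 < f) := ⟨hf⟩
  have h01 : (1 : ZMod f) ≠ 0 := one_ne_zero
  intro k
  induction k with
  | zero =>
    intro j
    refine ⟨Or.inl rfl, ?_, fun _ => Or.inl rfl⟩
    intro h
    exact absurd h (not_bad p hp _ (Or.inl rfl))
  | succ k ih =>
    intro j
    obtain ⟨ih1, ih2, ih3⟩ := ih j
    have hstep : muIter p f (k + 1) j
        = fun x => muT p f (j + (k : ZMod f)) (muIter p f k j x) := by
      funext x
      show (shiftT^[k] (muT p f)) j (muIter p f k j x) = _
      rw [shiftT_iterate]
    have hcast : j + ((k + 1 : ℕ) : ZMod f) = (j + (k : ZMod f)) + 1 := by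
      push_cast; ring
    by_cases ht0 : j + (k : ZMod f) = 0
    · -- next applied map is `x ↦ x - 1`
      have hmu : muT p f (j + (k : ZMod f)) = fun x => x - 1 := by
        rw [ht0]; funext x; simp [muT]
      rw [hmu] at hstep
      have ht' : j + ((k + 1 : ℕ) : ZMod f) = 1 := by rw [hcast, ht0, zero_add]
      have hgood : muIter p f k j = (fun x => x) ∨ muIter p f k j = (fun x => x + 1) ∨
          muIter p f k j = (fun x => p - 2 - x) ∨ muIter p f k j = (fun x => p - 1 - x) := by
        rcases ih1 with h | h | h | h | h | h
        · exact Or.inl h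
        · exact absurd (ht0.symm.trans (ih2 (Or.inl h))) (Ne.symm h01)
        · exact Or.inr (Or.inl h)
        · exact Or.inr (Or.inr (Or.inl h))
        · exact absurd (ht0.symm.trans (ih2 (Or.inr h))) (Ne.symm h01)
        · exact Or.inr (Or.inr (Or.inr h))
      rcases hgood with h | h | h | h
      · -- x ↦ x - 1
        have hnew : muIter p f (k + 1) j = fun x => x - 1 := by
          rw [hstep, h]
        exact ⟨Or.inr (Or.inl hnew), fun _ => ht',
          fun _ => Or.inr (Or.inr (Or.inl hnew))⟩
      · -- (x+1) - 1 = x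
        have hnew : muIter p f (k + 1) j = fun x => x := by
          rw [hstep, h]; funext x; ring
        exact ⟨Or.inl hnew, fun hb => absurd hb (not_bad p hp _ (Or.inl hnew)),
          fun _ => Or.inl hnew⟩
      · -- (p-2-x) - 1 = p-3-x
        have hnew : muIter p f (k + 1) j = fun x => p - 3 - x := by
          rw [hstep, h]; funext x; ring
        exact ⟨Or.inr (Or.inr (Or.inr (Or.inr (Or.inl hnew)))), fun _ => ht',
          fun _ => Or.inr (Or.inr (Or.inr hnew))⟩
      · -- (p-1-x) - 1 = p-2-x
        have hnew : muIter p f (k + 1) j = fun x => p - 2 - x := by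
          rw [hstep, h]; funext x; ring
        exact ⟨Or.inr (Or.inr (Or.inr (Or.inl hnew))),
          fun hb => absurd hb (not_bad p hp _ (Or.inr (Or.inr (Or.inl hnew)))),
          fun _ => Or.inr (Or.inl hnew)⟩
    · by_cases ht1 : j + (k : ZMod f) = 1
      · -- next applied map is `x ↦ p - 2 - x`
        have hmu : muT p f (j + (k : ZMod f)) = fun x => p - 2 - x := by
          rw [ht1]; funext x; simp [muT, h01]
        rw [hmu] at hstep
        have hnot1 : j + ((k + 1 : ℕ) : ZMod f) ≠ 1 := by
          rw [hcast, ht1]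
          intro h
          exact h01 (by linear_combination h)
        have hgood := ih3 ht1
        rcases hgood with h | h | h | h
        · -- p - 2 - x
          have hnew : muIter p f (k + 1) j = fun x => p - 2 - x := by
            rw [hstep, h]
          exact ⟨Or.inr (Or.inr (Or.inr (Or.inl hnew))),
            fun hb => absurd hb (not_bad p hp _ (Or.inr (Or.inr (Or.inl hnew)))),
            fun h1 => absurd h1 hnot1⟩
        · -- p-2-(p-2-x) = x
          have hnew : muIter p f (k + 1) j = fun x => x := by
            rw [hstep, h]; funext x; ring
          exact ⟨Or.inl hnew, fun hb => absurd hb (not_bad p hp _ (Or.inl hnew)),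
            fun h1 => absurd h1 hnot1⟩
        · -- p-2-(x-1) = p-1-x
          have hnew : muIter p f (k + 1) j = fun x => p - 1 - x := by
            rw [hstep, h]; funext x; ring
          exact ⟨Or.inr (Or.inr (Or.inr (Or.inr (Or.inr hnew)))),
            fun hb => absurd hb (not_bad p hp _ (Or.inr (Or.inr (Or.inr hnew)))),
            fun h1 => absurd h1 hnot1⟩
        · -- p-2-(p-3-x) = x+1
          have hnew : muIter p f (k + 1) j = fun x => x + 1 := by
            rw [hstep, h]; funext x; ring
          exact ⟨Or.inr (Or.inr (Or.inl hnew)),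
            fun hb => absurd hb (not_bad p hp _ (Or.inr (Or.inl hnew))),
            fun h1 => absurd h1 hnot1⟩
      · -- next applied map is `x ↦ p - 1 - x`
        have hmu : muT p f (j + (k : ZMod f)) = fun x => p - 1 - x := by
          funext x; simp [muT, ht0, ht1]
        rw [hmu] at hstep
        have hnot1 : j + ((k + 1 : ℕ) : ZMod f) ≠ 1 := by
          rw [hcast]
          intro h
          exact ht0 (by linear_combination h)
        have hgood : muIter p f k j = (fun x => x) ∨ muIter p f k j = (fun x => x + 1) ∨
            muIter p f k j = (fun x => p - 2 - x) ∨ muIter p f k j = (fun x => p - 1 - x) := by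
          rcases ih1 with h | h | h | h | h | h
          · exact Or.inl h
          · exact absurd (ih2 (Or.inl h)) ht1
          · exact Or.inr (Or.inl h)
          · exact Or.inr (Or.inr (Or.inl h))
          · exact absurd (ih2 (Or.inr h)) ht1
          · exact Or.inr (Or.inr (Or.inr h))
        rcases hgood with h | h | h | h
        · -- p - 1 - x
          have hnew : muIter p f (k + 1) j = fun x => p - 1 - x := by
            rw [hstep, h]
          exact ⟨Or.inr (Or.inr (Or.inr (Or.inr (Or.inr hnew)))),
            fun hb => absurd hb (not_bad p hp _ (Or.inr (Or.inr (Or.inr hnew)))),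
            fun h1 => absurd h1 hnot1⟩
        · -- p-1-(x+1) = p-2-x
          have hnew : muIter p f (k + 1) j = fun x => p - 2 - x := by
            rw [hstep, h]; funext x; ring
          exact ⟨Or.inr (Or.inr (Or.inr (Or.inl hnew))),
            fun hb => absurd hb (not_bad p hp _ (Or.inr (Or.inr (Or.inl hnew)))),
            fun h1 => absurd h1 hnot1⟩
        · -- p-1-(p-2-x) = x+1
          have hnew : muIter p f (k + 1) j = fun x => x + 1 := by
            rw [hstep, h]; funext x; ring
          exact ⟨Or.inr (Or.inr (Or.inl hnew)),
            fun hb => absurd hb (not_bad p hp _ (Or.inr (Or.inl hnew))),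
            fun h1 => absurd h1 hnot1⟩
        · -- p-1-(p-1-x) = x
          have hnew : muIter p f (k + 1) j = fun x => x := by
            rw [hstep, h]; funext x; ring
          exact ⟨Or.inl hnew, fun hb => absurd hb (not_bad p hp _ (Or.inl hnew)),
            fun h1 => absurd h1 hnot1⟩

/-- every entry `μⱼ⁽ᵏ⁾(x)` for `1 ≤ k ≤ l` lies in
`{x, x-1, x+1, p-2-x, p-3-x, p-1-x}`. -/
theorem muIter_entry_mem (p : ℤ) (f : ℕ) (hf : 1 < f) (hp : 3 < p) :
    ∀ k : ℕ, 1 ≤ k → k ≤ lVal f → ∀ j : ZMod f,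
      muIter p f k j = (fun x => x) ∨
      muIter p f k j = (fun x => x - 1) ∨
      muIter p f k j = (fun x => x + 1) ∨
      muIter p f k j = (fun x => p - 2 - x) ∨
      muIter p f k j = (fun x => p - 3 - x) ∨
      muIter p f k j = (fun x => p - 1 - x) := by
  intro k _ _ j
  exact (key p f hf hp k j).1
end
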